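/- arXiv:2104.04352 — 7 statements merged into one kernel-verified Lean document; each statement's English description precedes it below -/
import Mathlib

section
/- For any bipartite quantum state ρ_{AB} on a finite-dimensional Hilbert space H_A ⊗ H_B, the purities of the marginals satisfy tr[ρ_A²] + tr[ρ_B²] ≤ 1 + tr[ρ_{AB}²], where ρ_A = tr_B ρ_{AB} and ρ_B = tr_A ρ_{AB}. -/
/-!
Let `S_A`, `S_B` be the operators on `(H_A ⊗ H_B)^{⊗2}` exchanging the two copies of `H_A`,
resp. of `H_B`. They are commuting Hermitian involutions, so `(1 - S_A)(1 - S_B) ≥ 0`, and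
testing this against `ρ ⊗ ρ ≥ 0` gives `tr[(ρ ⊗ ρ) S_A] + tr[(ρ ⊗ ρ) S_B] ≤ tr[ρ ⊗ ρ] +
tr[(ρ ⊗ ρ) S_A S_B]`. By the swap trick the four traces are `tr[ρ_A²]`, `tr[ρ_B²]`, `1` and
`tr[ρ²]`, since `S_A S_B` exchanges the two copies of `H_A ⊗ H_B`.
-/

open Matrix ComplexOrder
open Kronecker

/-- Partial trace over the second tensor factor. -/
noncomputable def ptraceB {m n : Type*} [Fintype n]
    (ρ : Matrix (m × n) (m × n) ℂ) : Matrix m m ℂ :=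
  Matrix.of fun i j => ∑ k, ρ (i, k) (j, k)

/-- Partial trace over the first tensor factor. -/
noncomputable def ptraceA {m n : Type*} [Fintype m]
    (ρ : Matrix (m × n) (m × n) ℂ) : Matrix n n ℂ :=
  Matrix.of fun i j => ∑ k, ρ (k, i) (k, j)

section Involutions

variable {𝕜 n : Type*} [RCLike 𝕜] [Fintype n] [DecidableEq n]

theorem Matrix.PosSemidef.trace_mul_nonneg {A B : Matrix n n 𝕜} (hA : A.PosSemidef)
    (hB : B.PosSemidef) : 0 ≤ (A * B).trace := by
  obtain ⟨C, rfl⟩ : ∃ C : Matrix n n 𝕜, B = star C * C := by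
    open scoped MatrixOrder Matrix.Norms.L2Operator in
    exact CStarAlgebra.nonneg_iff_eq_star_mul_self.mp hB.nonneg
  rw [← mul_assoc, trace_mul_cycle]
  exact (hA.mul_mul_conjTranspose_same C).trace_nonneg

lemma one_sub_mul_self_of_mul_self_eq_one {P : Matrix n n 𝕜} (hP : P * P = 1) :
    (1 - P) * (1 - P) = (2 : 𝕜) • (1 - P) := by
  rw [sub_mul, mul_sub, mul_sub, hP, one_mul, one_mul, mul_one, two_smul]
  abel

/-- `K = (1 - P)(1 - Q)` is Hermitian with `K² = 4K`, so `K = (K/2)ᴴ (K/2)`. -/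
theorem posSemidef_one_sub_mul_one_sub {P Q : Matrix n n 𝕜} (hP : P.IsHermitian)
    (hQ : Q.IsHermitian) (hPP : P * P = 1) (hQQ : Q * Q = 1) (hPQ : Commute P Q) :
    ((1 - P) * (1 - Q)).PosSemidef := by
  set K := (1 - P) * (1 - Q) with hK
  have hcomm : Commute (1 - P) (1 - Q) :=
    (Commute.one_left (1 - Q)).sub_left ((Commute.one_right P).sub_right hPQ)
  have hKherm : Kᴴ = K := by
    rw [hK, conjTranspose_mul, conjTranspose_sub, conjTranspose_sub, conjTranspose_one, hP.eq,
      hQ.eq, hcomm.eq]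
  have hKK : K * K = (4 : 𝕜) • K := by
    calc K * K = ((1 - P) * (1 - P)) * ((1 - Q) * (1 - Q)) := by
          rw [hK, mul_assoc, ← mul_assoc (1 - Q), ← hcomm.eq, mul_assoc, mul_assoc]
      _ = (4 : 𝕜) • K := by
          rw [one_sub_mul_self_of_mul_self_eq_one hPP, one_sub_mul_self_of_mul_self_eq_one hQQ,
            smul_mul_smul_comm, hK]
          norm_num
  have hCC : ((2⁻¹ : 𝕜) • K)ᴴ * ((2⁻¹ : 𝕜) • K) = K := by
    rw [conjTranspose_smul, hKherm, smul_mul_smul_comm, hKK, smul_smul]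
    norm_num
  rw [← hCC]
  exact posSemidef_conjTranspose_mul_self _

theorem Matrix.PosSemidef.trace_mul_add_trace_mul_le {M P Q : Matrix n n 𝕜}
    (hM : M.PosSemidef) (hP : P.IsHermitian) (hQ : Q.IsHermitian)
    (hPP : P * P = 1) (hQQ : Q * Q = 1) (hPQ : Commute P Q) :
    (M * P).trace + (M * Q).trace ≤ M.trace + (M * (P * Q)).trace := by
  have h := hM.trace_mul_nonneg (posSemidef_one_sub_mul_one_sub hP hQ hPP hQQ hPQ)
  have hexpand : M * ((1 - P) * (1 - Q)) = M - M * P - M * Q + M * (P * Q) := by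
    noncomm_ring
  rw [hexpand, trace_add, trace_sub, trace_sub] at h
  rw [← sub_nonneg]
  convert h using 1
  ring

end Involutions

section Permutations

variable {n R : Type*} [DecidableEq n] [NonAssocSemiring R]

lemma trace_mul_permMatrix [Fintype n] (M : Matrix n n R) (σ : Equiv.Perm n) :
    (M * σ.permMatrix R).trace = ∑ i, M i (σ.symm i) := by
  simp [Equiv.Perm.permMatrix, PEquiv.mul_toMatrix_toPEquiv, trace]

lemma permMatrix_mul_self [Fintype n] {σ : Equiv.Perm n} (hσ : σ * σ = 1) :
    σ.permMatrix R * σ.permMatrix R = 1 := by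
  rw [← permMatrix_mul, hσ, permMatrix_one]

lemma Commute.permMatrix [Fintype n] {σ τ : Equiv.Perm n} (h : Commute σ τ) :
    Commute (σ.permMatrix R) (τ.permMatrix R) := by
  rw [Commute, SemiconjBy, ← permMatrix_mul, ← permMatrix_mul, h.eq]

lemma isHermitian_permMatrix [StarRing R] {σ : Equiv.Perm n} (hσ : σ * σ = 1) :
    (σ.permMatrix R).IsHermitian := by
  rw [IsHermitian, conjTranspose_permMatrix, inv_eq_of_mul_eq_one_left hσ]

end Permutations

section Swaps

variable {X Y : Type*}

def swapFst : Equiv.Perm ((X × Y) × (X × Y)) :=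
  Function.Involutive.toPerm (fun p => ((p.2.1, p.1.2), (p.1.1, p.2.2))) fun _ => rfl

def swapSnd : Equiv.Perm ((X × Y) × (X × Y)) :=
  Function.Involutive.toPerm (fun p => ((p.1.1, p.2.2), (p.2.1, p.1.2))) fun _ => rfl

lemma swapFst_mul_self : (swapFst : Equiv.Perm ((X × Y) × (X × Y))) * swapFst = 1 := rfl

lemma swapSnd_mul_self : (swapSnd : Equiv.Perm ((X × Y) × (X × Y))) * swapSnd = 1 := rfl

lemma commute_swapFst_swapSnd :
    Commute (swapFst : Equiv.Perm ((X × Y) × (X × Y))) swapSnd := rfl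

lemma swapSnd_mul_swapFst :
    (swapSnd : Equiv.Perm ((X × Y) × (X × Y))) * swapFst = Equiv.prodComm _ _ := rfl

lemma trace_kronecker_mul_permMatrix_prodComm {Z R : Type*} [Fintype Z] [DecidableEq Z]
    [CommSemiring R] (A B : Matrix Z Z R) :
    ((A ⊗ₖ B) * Equiv.Perm.permMatrix R (Equiv.prodComm Z Z)).trace = (A * B).trace := by
  rw [trace_mul_permMatrix]
  simp [trace, mul_apply, Fintype.sum_prod_type]

variable [Fintype X] [Fintype Y] [DecidableEq X] [DecidableEq Y]

lemma trace_kronecker_mul_permMatrix_swapFst (A B : Matrix (X × Y) (X × Y) ℂ) :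
    ((A ⊗ₖ B) * swapFst.permMatrix ℂ).trace = (ptraceB A * ptraceB B).trace := by
  rw [trace_mul_permMatrix]
  simp only [swapFst, kroneckerMap_apply, Fintype.sum_prod_type, trace, ptraceB, diag_apply,
    mul_apply, of_apply, Finset.sum_mul_sum]
  exact Finset.sum_congr rfl fun _ _ => Finset.sum_comm

lemma trace_kronecker_mul_permMatrix_swapSnd (A B : Matrix (X × Y) (X × Y) ℂ) :
    ((A ⊗ₖ B) * swapSnd.permMatrix ℂ).trace = (ptraceA A * ptraceA B).trace := by
  rw [trace_mul_permMatrix]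
  simp only [swapSnd, kroneckerMap_apply, Fintype.sum_prod_type, trace, ptraceA, diag_apply,
    mul_apply, of_apply, Finset.sum_mul_sum]
  rw [Finset.sum_comm]
  refine Finset.sum_congr rfl fun _ _ => ?_
  conv_rhs => rw [Finset.sum_comm]
  exact Finset.sum_congr rfl fun _ _ => Finset.sum_comm

end Swaps

/-- For any bipartite quantum state `ρ` on `H_A ⊗ H_B`, the purities of the marginals
satisfy `tr[ρ_A²] + tr[ρ_B²] ≤ 1 + tr[ρ²]`. -/
theorem purity_marginals_le {dA dB : ℕ}
    (ρ : Matrix (Fin dA × Fin dB) (Fin dA × Fin dB) ℂ)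
    (hpos : ρ.PosSemidef) (htr : ρ.trace = 1) :
    (ptraceB ρ * ptraceB ρ).trace + (ptraceA ρ * ptraceA ρ).trace
      ≤ 1 + (ρ * ρ).trace := by
  have h := (hpos.kronecker hpos).trace_mul_add_trace_mul_le
    (isHermitian_permMatrix swapFst_mul_self) (isHermitian_permMatrix swapSnd_mul_self)
    (permMatrix_mul_self swapFst_mul_self) (permMatrix_mul_self swapSnd_mul_self)
    commute_swapFst_swapSnd.permMatrix
  rwa [← permMatrix_mul, swapSnd_mul_swapFst, trace_kronecker_mul_permMatrix_prodComm,
    trace_kronecker_mul_permMatrix_swapFst, trace_kronecker_mul_permMatrix_swapSnd,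
    trace_kronecker, htr, one_mul] at h
end

section
/- Let E : M_d(ℂ) → M_{d'}(ℂ) be a quantum channel with unitarity u(E) = (d/(d²−1))·(d·tr[Ẽ(I/d)²] − tr[E(I/d)²]), where Ẽ is a complementary channel of E. If E_{X→A} and E_{X→B} are the two marginal channels of an isometry channel E_{X→AB}(ρ) = VρV† (so each is the complementary channel of the other), then u(E_{X→A}) + u(E_{X→B}) ≤ 1. -/
open Matrix ComplexOrder

/-- The image `V (I/d) V†` of the maximally mixed state under the isometry channel. -/
noncomputable def mixedImage {dX dA dB : ℕ}
    (V : Matrix (Fin dA × Fin dB) (Fin dX) ℂ) :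
    Matrix (Fin dA × Fin dB) (Fin dA × Fin dB) ℂ :=
  V * (((dX : ℂ))⁻¹ • (1 : Matrix (Fin dX) (Fin dX) ℂ)) * Vᴴ

/-!
Let `N = V (I/d) V†` and let `S_A`, `S_B` be the operators on two copies of `A ⊗ B` that
exchange the `A`-factors, resp. the `B`-factors, of the copies. They are commuting self-adjoint
involutions, so `(1 - S_A)(1 - S_B)/4` is an orthogonal projection and its trace against
`N ⊗ N ≥ 0` is nonnegative. Expanding the product with the swap trick
`tr[S_A (N ⊗ N)] = tr[(tr_B N)²]` gives `tr[(tr_B N)²] + tr[(tr_A N)²] ≤ (tr N)² + tr[N²]`,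
which is `1 + 1/d` because `N² = N/d`. For `d ≥ 2` the sum of the two unitarities equals
`d/(d + 1) · (tr[(tr_B N)²] + tr[(tr_A N)²])`, hence is at most `1`.
-/

open scoped Kronecker

namespace Matrix

variable {n : Type*} [Fintype n] {𝕜 : Type*} [RCLike 𝕜]

theorem IsStarProjection.trace_mul_nonneg {P K : Matrix n n 𝕜} (hP : IsStarProjection P)
    (hK : K.PosSemidef) : 0 ≤ (P * K).trace := by
  have hPP : P * P = P := hP.isIdempotentElem
  have hPH : Pᴴ = P := hP.isSelfAdjoint
  calc 0 ≤ (Pᴴ * K * P).trace := (hK.conjTranspose_mul_mul_same P).trace_nonneg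
    _ = (P * K).trace := by rw [hPH, trace_mul_cycle, hPP]

theorem trace_permMatrix_mul {R : Type*} [Semiring R] [DecidableEq n] (σ : Equiv.Perm n)
    (K : Matrix n n R) : (σ.permMatrix R * K).trace = ∑ i, K (σ i) i := by
  simp [trace, PEquiv.toMatrix_toPEquiv_mul]

theorem isStarProjection_inv_two_smul_one_sub_permMatrix [DecidableEq n] {σ : Equiv.Perm n}
    (hσ : σ * σ = 1) : IsStarProjection ((2 : 𝕜)⁻¹ • (1 - σ.permMatrix 𝕜)) := by
  have hS : σ.permMatrix 𝕜 * σ.permMatrix 𝕜 = 1 := by rw [← permMatrix_mul, hσ, permMatrix_one]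
  have hsq : (1 - σ.permMatrix 𝕜) * (1 - σ.permMatrix 𝕜) = (2 : 𝕜) • (1 - σ.permMatrix 𝕜) := by
    rw [sub_mul, mul_sub, mul_sub, hS, two_smul]
    simp only [mul_one, one_mul]
    abel
  constructor
  · rw [IsIdempotentElem, smul_mul_smul, hsq, smul_smul]
    norm_num
  · rw [IsSelfAdjoint, star_smul, star_sub, star_one, star_eq_conjTranspose,
      conjTranspose_permMatrix, inv_eq_of_mul_eq_one_left hσ]
    simp

end Matrix

section SwapOperators

variable {A B : Type*}

def swapA : Equiv.Perm ((A × B) × (A × B)) :=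
  Function.Involutive.toPerm (fun p => ((p.2.1, p.1.2), (p.1.1, p.2.2))) fun _ => rfl

def swapB : Equiv.Perm ((A × B) × (A × B)) :=
  Function.Involutive.toPerm (fun p => ((p.1.1, p.2.2), (p.2.1, p.1.2))) fun _ => rfl

@[simp]
theorem swapA_apply (p : (A × B) × (A × B)) : swapA p = ((p.2.1, p.1.2), (p.1.1, p.2.2)) := rfl

@[simp]
theorem swapB_apply (p : (A × B) × (A × B)) : swapB p = ((p.1.1, p.2.2), (p.2.1, p.1.2)) := rfl

theorem swapA_mul_self : (swapA : Equiv.Perm ((A × B) × (A × B))) * swapA = 1 :=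
  Equiv.ext fun _ => rfl

theorem swapB_mul_self : (swapB : Equiv.Perm ((A × B) × (A × B))) * swapB = 1 :=
  Equiv.ext fun _ => rfl

theorem swapA_mul_swapB : (swapA : Equiv.Perm ((A × B) × (A × B))) * swapB = Equiv.prodComm _ _ :=
  Equiv.ext fun _ => rfl

theorem swapB_mul_swapA : (swapB : Equiv.Perm ((A × B) × (A × B))) * swapA = Equiv.prodComm _ _ :=
  Equiv.ext fun _ => rfl

variable [Fintype A] [Fintype B]

theorem sum_kronecker_apply_swapA (N : Matrix (A × B) (A × B) ℂ) :
    ∑ z, (N ⊗ₖ N) (swapA z) z = (ptraceB N * ptraceB N).trace := by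
  simp only [trace, diag, mul_apply, ptraceB, of_apply, Finset.sum_mul_sum, Fintype.sum_prod_type,
    kroneckerMap_apply, swapA_apply]
  conv_lhs => arg 2; ext; rw [Finset.sum_comm]
  exact Finset.sum_comm

theorem sum_kronecker_apply_swapB (N : Matrix (A × B) (A × B) ℂ) :
    ∑ z, (N ⊗ₖ N) (swapB z) z = (ptraceA N * ptraceA N).trace := by
  have hA : ptraceA N = ptraceB (N.submatrix Prod.swap Prod.swap) := rfl
  rw [hA, ← sum_kronecker_apply_swapA]
  exact Fintype.sum_equiv ((Equiv.prodComm A B).prodCongr (Equiv.prodComm A B)) _ _ fun _ => rfl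

theorem sum_kronecker_apply_prodComm (N : Matrix (A × B) (A × B) ℂ) :
    ∑ z, (N ⊗ₖ N) (Equiv.prodComm _ _ z) z = (N * N).trace := by
  simp only [trace, diag, mul_apply, Fintype.sum_prod_type, kroneckerMap_apply,
    Equiv.prodComm_apply, Prod.swap, mul_comm]

end SwapOperators

theorem Matrix.PosSemidef.trace_ptraceB_sq_add_trace_ptraceA_sq_le {A B : Type*} [Fintype A]
    [Fintype B] {N : Matrix (A × B) (A × B) ℂ} (hN : N.PosSemidef) :
    (ptraceB N * ptraceB N).trace + (ptraceA N * ptraceA N).trace ≤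
      N.trace ^ 2 + (N * N).trace := by
  classical
  set SA := (swapA : Equiv.Perm ((A × B) × (A × B))).permMatrix ℂ
  set SB := (swapB : Equiv.Perm ((A × B) × (A × B))).permMatrix ℂ
  set SW := Equiv.Perm.permMatrix ℂ (Equiv.prodComm (A × B) (A × B))
  have hSASB : SA * SB = SW := by rw [← permMatrix_mul, swapB_mul_swapA]
  have hSBSA : SB * SA = SW := by rw [← permMatrix_mul, swapA_mul_swapB]
  have hAB : (1 - SA) * (1 - SB) = 1 - SA - SB + SW := by
    simp only [mul_sub, sub_mul, one_mul, mul_one, hSASB]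
    abel
  have hBA : (1 - SB) * (1 - SA) = 1 - SA - SB + SW := by
    simp only [mul_sub, sub_mul, one_mul, mul_one, hSBSA]
    abel
  have hproj : IsStarProjection ((2 : ℂ)⁻¹ • (1 - SA) * (2 : ℂ)⁻¹ • (1 - SB)) :=
    (isStarProjection_inv_two_smul_one_sub_permMatrix swapA_mul_self).mul
      (isStarProjection_inv_two_smul_one_sub_permMatrix swapB_mul_self) <| by
        rw [Commute, SemiconjBy, smul_mul_smul, smul_mul_smul, hAB, hBA]
  have hnonneg := hproj.trace_mul_nonneg (hN.kronecker hN)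
  rw [smul_mul_smul, hAB, smul_mul_assoc, trace_smul, add_mul, sub_mul, sub_mul, one_mul,
    trace_add, trace_sub, trace_sub, trace_permMatrix_mul, trace_permMatrix_mul,
    trace_permMatrix_mul, sum_kronecker_apply_swapA, sum_kronecker_apply_swapB,
    sum_kronecker_apply_prodComm, trace_kronecker, smul_eq_mul] at hnonneg
  have hsum : 0 ≤ N.trace * N.trace - (ptraceB N * ptraceB N).trace
      - (ptraceA N * ptraceA N).trace + (N * N).trace :=
    le_of_mul_le_mul_left (by rwa [mul_zero]) (by norm_num : (0 : ℂ) < 2⁻¹ * 2⁻¹)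
  rw [← sub_nonneg]
  convert hsum using 1
  ring

section MixedImage

variable {dX dA dB : ℕ} (V : Matrix (Fin dA × Fin dB) (Fin dX) ℂ)

theorem mixedImage_eq_smul : mixedImage V = (dX : ℂ)⁻¹ • (V * Vᴴ) := by
  rw [mixedImage, Matrix.mul_smul, Matrix.mul_one, Matrix.smul_mul]

theorem posSemidef_mixedImage : (mixedImage V).PosSemidef := by
  rw [mixedImage_eq_smul]
  exact (posSemidef_self_mul_conjTranspose V).smul (inv_nonneg.mpr (Nat.cast_nonneg dX))

variable {V} (hV : Vᴴ * V = 1)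
include hV

theorem trace_mixedImage (hdX : dX ≠ 0) : (mixedImage V).trace = 1 := by
  rw [mixedImage_eq_smul, trace_smul, trace_mul_comm, hV, trace_one, Fintype.card_fin, smul_eq_mul,
    inv_mul_cancel₀ (Nat.cast_ne_zero.mpr hdX)]

theorem mixedImage_mul_self : mixedImage V * mixedImage V = (dX : ℂ)⁻¹ • mixedImage V := by
  rw [mixedImage_eq_smul, smul_mul_smul, Matrix.mul_assoc, ← Matrix.mul_assoc Vᴴ, hV,
    Matrix.one_mul, smul_smul]

end MixedImage

theorem unitarity_information_disturbance_general {dX dA dB : ℕ}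
    (V : Matrix (Fin dA × Fin dB) (Fin dX) ℂ) (hV : Vᴴ * V = 1) :
    ((dX : ℂ) / ((dX : ℂ) ^ 2 - 1)) *
        ((dX : ℂ) * (ptraceA (mixedImage V) * ptraceA (mixedImage V)).trace
          - (ptraceB (mixedImage V) * ptraceB (mixedImage V)).trace)
      + ((dX : ℂ) / ((dX : ℂ) ^ 2 - 1)) *
        ((dX : ℂ) * (ptraceB (mixedImage V) * ptraceB (mixedImage V)).trace
          - (ptraceA (mixedImage V) * ptraceA (mixedImage V)).trace)
      ≤ 1 := by
  rcases Nat.lt_or_ge dX 2 with hd | hd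
  · -- for `dX ≤ 1` the prefactor `dX / (dX ^ 2 - 1)` is `0` (for `dX = 1` via `x / 0 = 0`)
    interval_cases dX <;> simp
  have hpurity := (posSemidef_mixedImage V).trace_ptraceB_sq_add_trace_ptraceA_sq_le
  rw [mixedImage_mul_self hV, trace_smul, trace_mixedImage hV (by omega), one_pow,
    smul_eq_mul, mul_one] at hpurity
  have hd0 : (dX : ℂ) ≠ 0 := Nat.cast_ne_zero.mpr (by omega)
  have hd1 : (dX : ℂ) - 1 ≠ 0 := sub_ne_zero.mpr (Nat.cast_ne_one.mpr (by omega))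
  have hd2 : (dX : ℂ) + 1 ≠ 0 := by exact_mod_cast Nat.succ_ne_zero dX
  calc _ = (dX : ℂ) / (dX + 1) * ((ptraceB (mixedImage V) * ptraceB (mixedImage V)).trace
          + (ptraceA (mixedImage V) * ptraceA (mixedImage V)).trace) := by
        rw [show (dX : ℂ) ^ 2 - 1 = (dX - 1) * (dX + 1) by ring]
        field_simp
        ring
    _ ≤ (dX : ℂ) / (dX + 1) * (1 + (dX : ℂ)⁻¹) :=
        mul_le_mul_of_nonneg_left hpurity (div_nonneg (Nat.cast_nonneg _) (by positivity))
    _ = 1 := by field_simp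

/-- Unitarity-based information-disturbance relation: for the marginal channels
`E_{X→A}(ρ) = tr_B[VρV†]` and `E_{X→B}(ρ) = tr_A[VρV†]` of an isometry channel
(each the complementary channel of the other), expressing the unitarity as
`u(E) = (d/(d²−1))·(d·tr[Ẽ(I/d)²] − tr[E(I/d)²])` in terms of the complementary
channel `Ẽ`, one has `u(E_{X→A}) + u(E_{X→B}) ≤ 1`. -/
theorem unitarity_information_disturbance {dX dA dB : ℕ} (hdX : 0 < dX)
    (V : Matrix (Fin dA × Fin dB) (Fin dX) ℂ) (hV : Vᴴ * V = 1) :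
    ((dX : ℂ) / ((dX : ℂ) ^ 2 - 1)) *
        ((dX : ℂ) * (ptraceA (mixedImage V) * ptraceA (mixedImage V)).trace
          - (ptraceB (mixedImage V) * ptraceB (mixedImage V)).trace)
      + ((dX : ℂ) / ((dX : ℂ) ^ 2 - 1)) *
        ((dX : ℂ) * (ptraceB (mixedImage V) * ptraceB (mixedImage V)).trace
          - (ptraceA (mixedImage V) * ptraceA (mixedImage V)).trace)
      ≤ 1 :=
  unitarity_information_disturbance_general V hV
end

section
/- For a bipartite channel E_{AB}, the sub-unitarity u_{A→A}(E_{AB}) equals the unitarity u(E_A) of the induced local channel E_A(ρ) := tr_B[E_{AB}(ρ ⊗ I_B/d_B)]. -/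
open Matrix Kronecker ComplexOrder

/-- The Choi matrix of a linear map on matrices; the map is completely positive
iff this matrix is positive semidefinite. -/
noncomputable def choi {ι κ : Type*} [Fintype ι] [DecidableEq ι]
    (E : Matrix ι ι ℂ →ₗ[ℂ] Matrix κ κ ℂ) : Matrix (κ × ι) (κ × ι) ℂ :=
  Matrix.of fun p q => E (Matrix.single p.2 q.2 1) p.1 q.1

/-! Each entry of the bipartite transfer matrix already equals the corresponding entry of the
local one: pairing `X ⊗ I_B` against a bipartite matrix is pairing `X` against its partial trace
over `B`, and the two factors `1/√d_B` combine into the `1/d_B` of the maximally mixed state. -/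

lemma ptraceB_smul {m n : Type*} [Fintype n] (c : ℂ) (ρ : Matrix (m × n) (m × n) ℂ) :
    ptraceB (c • ρ) = c • ptraceB ρ := by
  ext i j
  simp [ptraceB, Finset.mul_sum]

lemma trace_kronecker_one_mul {m n : Type*} [Fintype m] [Fintype n] [DecidableEq n]
    (M : Matrix m m ℂ) (ρ : Matrix (m × n) (m × n) ℂ) :
    ((M ⊗ₖ (1 : Matrix n n ℂ)) * ρ).trace = (M * ptraceB ρ).trace := by
  simp only [Matrix.trace, Matrix.diag, Matrix.mul_apply, ptraceB, Matrix.of_apply,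
    Matrix.kroneckerMap_apply, Matrix.one_apply, Fintype.sum_prod_type, mul_ite, mul_one,
    mul_zero, ite_mul, zero_mul, Finset.mul_sum, Finset.sum_ite_eq, Finset.mem_univ, if_true]
  exact Finset.sum_congr rfl fun _ _ => Finset.sum_comm

lemma trace_conjTranspose_kronecker_smul_one_mul_apply {m n : Type*} [Fintype m] [Fintype n]
    [DecidableEq n] (E : Matrix (m × n) (m × n) ℂ →ₗ[ℂ] Matrix (m × n) (m × n) ℂ)
    (M N : Matrix m m ℂ) (c : ℂ) :
    ((M ⊗ₖ (c • (1 : Matrix n n ℂ)))ᴴ * E (N ⊗ₖ (c • 1))).trace =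
      (Mᴴ * ptraceB (E (N ⊗ₖ ((c * star c) • (1 : Matrix n n ℂ))))).trace := by
  simp only [kronecker_smul, conjTranspose_smul, conjTranspose_kronecker, conjTranspose_one,
    map_smul, Matrix.smul_mul, Matrix.mul_smul, trace_smul, trace_kronecker_one_mul, ptraceB_smul, smul_smul]

theorem subunitarity_eq_local_unitarity_general {dA dB : ℕ}
    (E : Matrix (Fin dA × Fin dB) (Fin dA × Fin dB) ℂ →ₗ[ℂ]
         Matrix (Fin dA × Fin dB) (Fin dA × Fin dB) ℂ)
    (X : Fin (dA ^ 2 - 1) → Matrix (Fin dA) (Fin dA) ℂ) :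
    (1 / ((dA : ℝ) ^ 2 - 1)) * ∑ i, ∑ j,
        ‖((X i ⊗ₖ ((Real.sqrt dB : ℂ)⁻¹ • (1 : Matrix (Fin dB) (Fin dB) ℂ)))ᴴ *
            E (X j ⊗ₖ ((Real.sqrt dB : ℂ)⁻¹ • 1))).trace‖ ^ 2
      = (1 / ((dA : ℝ) ^ 2 - 1)) * ∑ i, ∑ j,
        ‖((X i)ᴴ *
            ptraceB (E (X j ⊗ₖ (((dB : ℂ))⁻¹ • (1 : Matrix (Fin dB) (Fin dB) ℂ))))).trace‖ ^ 2 := by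
  have hc : (Real.sqrt dB : ℂ)⁻¹ * star (Real.sqrt dB : ℂ)⁻¹ = (dB : ℂ)⁻¹ := by
    rw [star_inv₀, Complex.star_def, Complex.conj_ofReal, ← mul_inv, ← Complex.ofReal_mul,
      Real.mul_self_sqrt (Nat.cast_nonneg dB), Complex.ofReal_natCast]
  simp only [trace_conjTranspose_kronecker_smul_one_mul_apply, hc]

/-- For a bipartite channel `E` the sub-unitarity `u_{A→A}(E)` equals the unitarity of
the induced local channel `E_A(ρ) = tr_B[E(ρ ⊗ I_B/d_B)]`. -/
theorem subunitarity_eq_local_unitarity {dA dB : ℕ} (hdA : 0 < dA) (hdB : 0 < dB)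
    (E : Matrix (Fin dA × Fin dB) (Fin dA × Fin dB) ℂ →ₗ[ℂ]
         Matrix (Fin dA × Fin dB) (Fin dA × Fin dB) ℂ)
    (hCP : (choi E).PosSemidef) (hTP : ∀ ρ, (E ρ).trace = ρ.trace)
    (X : Fin (dA ^ 2 - 1) → Matrix (Fin dA) (Fin dA) ℂ)
    (hXtr : ∀ i, (X i).trace = 0)
    (hXortho : ∀ i j, ((X i)ᴴ * X j).trace = if i = j then 1 else 0) :
    (1 / ((dA : ℝ) ^ 2 - 1)) * ∑ i, ∑ j,
        ‖((X i ⊗ₖ ((Real.sqrt dB : ℂ)⁻¹ • (1 : Matrix (Fin dB) (Fin dB) ℂ)))ᴴ *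
            E (X j ⊗ₖ ((Real.sqrt dB : ℂ)⁻¹ • 1))).trace‖ ^ 2
      = (1 / ((dA : ℝ) ^ 2 - 1)) * ∑ i, ∑ j,
        ‖((X i)ᴴ *
            ptraceB (E (X j ⊗ₖ (((dB : ℂ))⁻¹ • (1 : Matrix (Fin dB) (Fin dB) ℂ))))).trace‖ ^ 2 :=
  subunitarity_eq_local_unitarity_general E X
end

section
/- Let E = Σ_i p_i E_{A,i} ⊗ E_{B,i} be a separable bipartite channel. Then tr[(X_0 ⊗ Y_k)† E(X_j ⊗ Y_0)] = 0 for all j ≥ 1, k ≥ 1, so the block T_{A→B} vanishes and u_{A→B}(E) = 0. -/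
open Matrix Kronecker ComplexOrder

namespace Matrix

variable {R m n ι : Type*} [CommRing R] [StarRing R] [Fintype m] [Fintype n]

theorem trace_conjTranspose_kronecker_mul_kronecker (A A' : Matrix m m R) (B B' : Matrix n n R) :
    ((A ⊗ₖ B)ᴴ * (A' ⊗ₖ B')).trace = (Aᴴ * A').trace * (Bᴴ * B').trace := by
  rw [conjTranspose_kronecker, ← mul_kronecker_mul, trace_kronecker]

theorem trace_conjTranspose_smul_one_mul [DecidableEq m] (c : R) (M : Matrix m m R) :
    ((c • (1 : Matrix m m R))ᴴ * M).trace = star c * M.trace := by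
  rw [conjTranspose_smul, conjTranspose_one, smul_mul, one_mul, trace_smul, smul_eq_mul]

theorem trace_conjTranspose_kronecker_mul_of_separable [Fintype ι] (p : ι → R)
    (EA : ι → Matrix m m R → Matrix m m R) (EB : ι → Matrix n n R → Matrix n n R)
    (E : Matrix (m × n) (m × n) R → Matrix (m × n) (m × n) R)
    (hsep : ∀ MA MB, E (MA ⊗ₖ MB) = ∑ i, p i • (EA i MA ⊗ₖ EB i MB))
    (A A' : Matrix m m R) (B B' : Matrix n n R) :
    ((A ⊗ₖ B)ᴴ * E (A' ⊗ₖ B')).trace =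
      ∑ i, p i * ((Aᴴ * EA i A').trace * (Bᴴ * EB i B').trace) := by
  simp only [hsep, Matrix.mul_sum, trace_sum, Matrix.mul_smul, trace_smul, smul_eq_mul,
    trace_conjTranspose_kronecker_mul_kronecker]

end Matrix

theorem separable_uAtoB_zero_general {dA dB r : ℕ}
    (p : Fin r → ℝ)
    (EA : Fin r → (Matrix (Fin dA) (Fin dA) ℂ →ₗ[ℂ] Matrix (Fin dA) (Fin dA) ℂ))
    (hEAtp : ∀ i ρ, (EA i ρ).trace = ρ.trace)
    (EB : Fin r → (Matrix (Fin dB) (Fin dB) ℂ →ₗ[ℂ] Matrix (Fin dB) (Fin dB) ℂ))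
    (E : Matrix (Fin dA × Fin dB) (Fin dA × Fin dB) ℂ →ₗ[ℂ]
         Matrix (Fin dA × Fin dB) (Fin dA × Fin dB) ℂ)
    (hsep : ∀ (MA : Matrix (Fin dA) (Fin dA) ℂ) (MB : Matrix (Fin dB) (Fin dB) ℂ),
        E (MA ⊗ₖ MB) = ∑ i, (p i : ℂ) • ((EA i MA) ⊗ₖ (EB i MB)))
    (X : Fin (dA ^ 2 - 1) → Matrix (Fin dA) (Fin dA) ℂ)
    (hXtr : ∀ i, (X i).trace = 0)
    (Y : Fin (dB ^ 2 - 1) → Matrix (Fin dB) (Fin dB) ℂ) :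
    (∀ k j, ((((Real.sqrt dA : ℂ)⁻¹ • (1 : Matrix (Fin dA) (Fin dA) ℂ)) ⊗ₖ Y k)ᴴ *
        E (X j ⊗ₖ ((Real.sqrt dB : ℂ)⁻¹ • (1 : Matrix (Fin dB) (Fin dB) ℂ)))).trace = 0)
    ∧
    (1 / ((dA : ℝ) ^ 2 - 1)) * ∑ k, ∑ j,
        ‖((((Real.sqrt dA : ℂ)⁻¹ • (1 : Matrix (Fin dA) (Fin dA) ℂ)) ⊗ₖ Y k)ᴴ *
            E (X j ⊗ₖ ((Real.sqrt dB : ℂ)⁻¹ • (1 : Matrix (Fin dB) (Fin dB) ℂ)))).trace‖ ^ 2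
      = 0 := by
  have block_eq_zero : ∀ k j, ((((Real.sqrt dA : ℂ)⁻¹ • (1 : Matrix (Fin dA) (Fin dA) ℂ)) ⊗ₖ
      Y k)ᴴ * E (X j ⊗ₖ ((Real.sqrt dB : ℂ)⁻¹ • (1 : Matrix (Fin dB) (Fin dB) ℂ)))).trace = 0 := by
    intro k j
    rw [trace_conjTranspose_kronecker_mul_of_separable (fun i => (p i : ℂ)) (fun i => EA i)
      (fun i => EB i) E hsep]
    refine Finset.sum_eq_zero fun i _ => ?_
    rw [trace_conjTranspose_smul_one_mul, hEAtp, hXtr, mul_zero, zero_mul, mul_zero]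
  exact ⟨block_eq_zero, by simp [block_eq_zero]⟩

/-- For a separable bipartite channel `E = Σ_i p_i E_{A,i} ⊗ E_{B,i}`, the Liouville
block `T_{A→B}` vanishes entrywise, and hence the sub-unitarity `u_{A→B}(E) = 0`. -/
theorem separable_uAtoB_zero {dA dB r : ℕ} (hdA : 0 < dA) (hdB : 0 < dB)
    (p : Fin r → ℝ) (hp0 : ∀ i, 0 ≤ p i) (hp1 : ∑ i, p i = 1)
    (EA : Fin r → (Matrix (Fin dA) (Fin dA) ℂ →ₗ[ℂ] Matrix (Fin dA) (Fin dA) ℂ))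
    (hEAcp : ∀ i, (choi (EA i)).PosSemidef) (hEAtp : ∀ i ρ, (EA i ρ).trace = ρ.trace)
    (EB : Fin r → (Matrix (Fin dB) (Fin dB) ℂ →ₗ[ℂ] Matrix (Fin dB) (Fin dB) ℂ))
    (hEBcp : ∀ i, (choi (EB i)).PosSemidef) (hEBtp : ∀ i ρ, (EB i ρ).trace = ρ.trace)
    (E : Matrix (Fin dA × Fin dB) (Fin dA × Fin dB) ℂ →ₗ[ℂ]
         Matrix (Fin dA × Fin dB) (Fin dA × Fin dB) ℂ)
    (hsep : ∀ (MA : Matrix (Fin dA) (Fin dA) ℂ) (MB : Matrix (Fin dB) (Fin dB) ℂ),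
        E (MA ⊗ₖ MB) = ∑ i, (p i : ℂ) • ((EA i MA) ⊗ₖ (EB i MB)))
    (X : Fin (dA ^ 2 - 1) → Matrix (Fin dA) (Fin dA) ℂ)
    (hXtr : ∀ i, (X i).trace = 0)
    (hXortho : ∀ i j, ((X i)ᴴ * X j).trace = if i = j then 1 else 0)
    (Y : Fin (dB ^ 2 - 1) → Matrix (Fin dB) (Fin dB) ℂ)
    (hYtr : ∀ i, (Y i).trace = 0)
    (hYortho : ∀ i j, ((Y i)ᴴ * Y j).trace = if i = j then 1 else 0) :
    (∀ k j, ((((Real.sqrt dA : ℂ)⁻¹ • (1 : Matrix (Fin dA) (Fin dA) ℂ)) ⊗ₖ Y k)ᴴ *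
        E (X j ⊗ₖ ((Real.sqrt dB : ℂ)⁻¹ • (1 : Matrix (Fin dB) (Fin dB) ℂ)))).trace = 0)
    ∧
    (1 / ((dA : ℝ) ^ 2 - 1)) * ∑ k, ∑ j,
        ‖((((Real.sqrt dA : ℂ)⁻¹ • (1 : Matrix (Fin dA) (Fin dA) ℂ)) ⊗ₖ Y k)ᴴ *
            E (X j ⊗ₖ ((Real.sqrt dB : ℂ)⁻¹ • (1 : Matrix (Fin dB) (Fin dB) ℂ)))).trace‖ ^ 2
      = 0 :=
  separable_uAtoB_zero_general p EA hEAtp EB E hsep X hXtr Y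
end

section
/- Let E₁, E₂ be quantum channels on M_d(ℂ) with unital Liouville blocks T₁, T₂ (entries tr[X_i† E_k(X_j)], i,j ≥ 1, in a Hermitian-compatible orthonormal basis with X_0 = I/√d). Then −d ≤ ⟨T₁, T₂⟩ := tr[T₁†T₂] ≤ d² − 1. -/
/-!
Vectorising matrices turns the Hilbert–Schmidt inner product `tr (Aᴴ B)` into the Euclidean
one, and `I/√d` together with the `X i` becomes an orthonormal basis of `M_d(ℂ)`. Since
`tr E(X j) = tr (X j) = 0`, Parseval's identity in this basis gives
`⟨T₁, T₂⟩ = Σ_j ⟨E₁ (X j), E₂ (X j)⟩ = ⟨J₁, J₂⟩ - ⟨E₁ I, E₂ I⟩ / d`, where `J_k = choi E_k`: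
the Hilbert–Schmidt inner product of two superoperators can be computed in any orthonormal
basis, and in the basis of matrix units it is `⟨J₁, J₂⟩`.

For channels, `J_k` and `E_k I` are positive semidefinite of trace `d` (this `choi` is not
normalised), and `0 ≤ ⟨A, B⟩ ≤ tr A * tr B` for positive semidefinite `A, B`. Hence
`⟨J₁, J₂⟩ ≥ 0` and `⟨E₁ I, E₂ I⟩ ≤ d²`, which is the lower bound. For the upper bound,
Cauchy–Schwarz reduces it to `‖T_k‖² = ‖J_k‖² - ‖E_k I‖² / d ≤ d² - 1`, where
`‖E_k I‖² ≥ (tr E_k I)² / d = d`.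
-/

open Matrix ComplexOrder

open scoped InnerProductSpace

theorem Nat.pos_of_add_one_eq_sq {a b : ℕ} (h : a + 1 = b ^ 2) : 0 < b :=
  Nat.pos_of_ne_zero fun hb => by simp [hb] at h

namespace Matrix

section vecL2

variable {m n 𝕜 : Type*} [RCLike 𝕜]

noncomputable def vecL2 : Matrix m n 𝕜 ≃ₗ[𝕜] EuclideanSpace 𝕜 (n × m) where
  toFun A := WithLp.toLp 2 A.vec
  invFun v := of fun i j => v (j, i)
  map_add' _ _ := rfl
  map_smul' _ _ := rfl
  left_inv _ := rfl
  right_inv _ := rfl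

theorem vecL2_apply (A : Matrix m n 𝕜) : vecL2 A = WithLp.toLp 2 A.vec := rfl

theorem vecL2_symm_single [DecidableEq m] [DecidableEq n] (p : n × m) :
    vecL2.symm (EuclideanSpace.single p (1 : 𝕜)) = single p.2 p.1 1 := by
  rw [LinearEquiv.symm_apply_eq, vecL2_apply, vec_single]
  rfl

variable [Fintype m] [Fintype n]

theorem inner_vecL2 (A B : Matrix m n 𝕜) : ⟪vecL2 A, vecL2 B⟫_𝕜 = (Aᴴ * B).trace := by
  rw [← star_vec_dotProduct_vec, dotProduct_comm]
  rfl

theorem norm_trace_sq_le [DecidableEq n] (A : Matrix n n 𝕜) :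
    ‖A.trace‖ ^ 2 ≤ Fintype.card n * RCLike.re (Aᴴ * A).trace := by
  have h := norm_inner_le_norm (𝕜 := 𝕜) (vecL2 (1 : Matrix n n 𝕜)) (vecL2 A)
  rw [inner_vecL2, conjTranspose_one, one_mul] at h
  have h₁ : ‖vecL2 (1 : Matrix n n 𝕜)‖ ^ 2 = Fintype.card n := by
    rw [@norm_sq_eq_re_inner 𝕜, inner_vecL2, conjTranspose_one, one_mul, trace_one,
      RCLike.natCast_re]
  have h₂ : ‖vecL2 A‖ ^ 2 = RCLike.re (Aᴴ * A).trace := by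
    rw [@norm_sq_eq_re_inner 𝕜, inner_vecL2]
  rw [← h₁, ← h₂, ← mul_pow]
  gcongr

end vecL2

section PosSemidef

variable {n 𝕜 : Type*} [Fintype n] [DecidableEq n] [RCLike 𝕜]

theorem IsHermitian.trace_mul_eq_sum_eigenvalues {B : Matrix n n 𝕜} (hB : B.IsHermitian)
    (A : Matrix n n 𝕜) :
    (A * B).trace = ∑ i, (star (hB.eigenvectorUnitary : Matrix n n 𝕜) * A *
      (hB.eigenvectorUnitary : Matrix n n 𝕜)) i i * hB.eigenvalues i := by
  conv_lhs => rw [hB.spectral_theorem, Unitary.conjStarAlgAut_apply, ← mul_assoc, ← mul_assoc,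
    trace_mul_comm, ← mul_assoc, ← mul_assoc]
  simp [trace, mul_diagonal]

theorem PosSemidef.trace_conjTranspose_mul_nonneg {A B : Matrix n n 𝕜} (hA : A.PosSemidef)
    (hB : B.PosSemidef) : 0 ≤ (Aᴴ * B).trace := by
  rw [hA.isHermitian.eq, hB.isHermitian.trace_mul_eq_sum_eigenvalues]
  have hA' := hA.conjTranspose_mul_mul_same (hB.isHermitian.eigenvectorUnitary : Matrix n n 𝕜)
  refine Finset.sum_nonneg fun i _ => mul_nonneg ?_ ?_
  · simpa [star_eq_conjTranspose] using hA'.diag_nonneg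
  · exact_mod_cast hB.eigenvalues_nonneg i

theorem PosSemidef.trace_conjTranspose_mul_le {A B : Matrix n n 𝕜} (hA : A.PosSemidef)
    (hB : B.PosSemidef) : (Aᴴ * B).trace ≤ A.trace * B.trace := by
  set U : Matrix n n 𝕜 := (hB.isHermitian.eigenvectorUnitary : Matrix n n 𝕜)
  set ev := hB.isHermitian.eigenvalues
  have hA' : (star U * A * U).PosSemidef := by
    simpa [star_eq_conjTranspose] using hA.conjTranspose_mul_mul_same U
  have htrA : (star U * A * U).trace = A.trace := by
    rw [trace_mul_cycle, Unitary.mul_star_self_of_mem hB.isHermitian.eigenvectorUnitary.2,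
      one_mul]
  have hev : ∀ i, (ev i : 𝕜) ≤ ∑ j, (ev j : 𝕜) := fun i => by
    exact_mod_cast Finset.single_le_sum (fun j _ => hB.eigenvalues_nonneg j) (Finset.mem_univ i)
  rw [hA.isHermitian.eq, hB.isHermitian.trace_mul_eq_sum_eigenvalues,
    hB.isHermitian.trace_eq_sum_eigenvalues, ← htrA, trace, Finset.sum_mul]
  exact Finset.sum_le_sum fun i _ => mul_le_mul_of_nonneg_left (hev i) hA'.diag_nonneg

end PosSemidef

end Matrix

namespace OrthonormalBasis

variable {ι 𝕜 E : Type*} [Fintype ι] [RCLike 𝕜] [NormedAddCommGroup E] [InnerProductSpace 𝕜 E]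
  [FiniteDimensional 𝕜 E]

theorem sum_inner_apply_eq_trace (b : OrthonormalBasis ι 𝕜 E) (F G : E →ₗ[𝕜] E) :
    ∑ i, ⟪F (b i), G (b i)⟫_𝕜 = (F.adjoint ∘ₗ G).trace 𝕜 E := by
  simp [LinearMap.trace_eq_sum_inner _ b, LinearMap.adjoint_inner_right]

theorem sum_sum_conj_inner_mul_inner_some (b : OrthonormalBasis (Option ι) 𝕜 E)
    (F G : E →ₗ[𝕜] E) (hF : ∀ j, ⟪b none, F (b (some j))⟫_𝕜 = 0) :
    ∑ j, ∑ i, (starRingEnd 𝕜) ⟪b (some i), F (b (some j))⟫_𝕜 * ⟪b (some i), G (b (some j))⟫_𝕜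
      = (F.adjoint ∘ₗ G).trace 𝕜 E - ⟪F (b none), G (b none)⟫_𝕜 := by
  have parseval : ∀ x y : E, ⟪b none, x⟫_𝕜 = 0 →
      ∑ i, (starRingEnd 𝕜) ⟪b (some i), x⟫_𝕜 * ⟪b (some i), y⟫_𝕜 = ⟪x, y⟫_𝕜 := by
    intro x y hx
    simp_rw [inner_conj_symm]
    rw [← b.sum_inner_mul_inner x y, Fintype.sum_option, ← inner_conj_symm, hx, map_zero,
      zero_mul, zero_add]
  rw [← b.sum_inner_apply_eq_trace, Fintype.sum_option, add_sub_cancel_left]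
  exact Finset.sum_congr rfl fun j _ => parseval _ _ (hF j)

end OrthonormalBasis

namespace Matrix

theorem exists_orthonormalBasis_vecL2 {n ι 𝕜 : Type*} [Fintype n] [DecidableEq n] [Fintype ι]
    [DecidableEq ι] [RCLike 𝕜] (X : ι → Matrix n n 𝕜)
    (hXtr : ∀ i, (X i).trace = 0)
    (hXortho : ∀ i j, ((X i)ᴴ * X j).trace = if i = j then 1 else 0)
    (hcard : Fintype.card ι + 1 = Fintype.card n ^ 2) :
    ∃ b : OrthonormalBasis (Option ι) 𝕜 (EuclideanSpace 𝕜 (n × n)),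
      b none = vecL2 (((Fintype.card n : ℝ).sqrt : 𝕜)⁻¹ • 1) ∧ ∀ i, b (some i) = vecL2 (X i) := by
  set c : 𝕜 := ((Fintype.card n : ℝ).sqrt : 𝕜)⁻¹
  have hn : (Fintype.card n : ℝ) ≠ 0 := by exact_mod_cast (Nat.pos_of_add_one_eq_sq hcard).ne'
  have hc : c * star c * Fintype.card n = 1 := by
    have h : (Fintype.card n : ℝ).sqrt⁻¹ * (Fintype.card n : ℝ).sqrt⁻¹ * Fintype.card n = 1 := by
      rw [← mul_inv, Real.mul_self_sqrt (Nat.cast_nonneg _), inv_mul_cancel₀ hn]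
    simp only [c, RCLike.star_def, map_inv₀, RCLike.conj_ofReal]
    exact_mod_cast h
  let v : Option ι → EuclideanSpace 𝕜 (n × n) := fun μ => vecL2 (μ.elim (c • 1) X)
  have hv : Orthonormal 𝕜 v := by
    rw [orthonormal_iff_ite]
    rintro (_ | i) (_ | j) <;>
      simp only [v, Option.elim, inner_vecL2, conjTranspose_smul, conjTranspose_one, smul_mul,
        Matrix.mul_smul, one_mul, mul_one, trace_smul, trace_one, trace_conjTranspose, hXtr,
        hXortho, smul_eq_mul, star_zero, mul_zero, reduceCtorEq, if_false, if_true,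
        Option.some.injEq]
    rw [← mul_assoc, hc]
  have hspan := hv.linearIndependent.span_eq_top_of_card_eq_finrank'
    (by simp [hcard, finrank_euclideanSpace, sq])
  exact ⟨OrthonormalBasis.mk hv hspan.ge, by simp [v], by simp [v]⟩

end Matrix

section Choi

variable {n κ : Type*} [Fintype n] [DecidableEq n]

theorem trace_choi [Fintype κ] (F : Matrix n n ℂ →ₗ[ℂ] Matrix κ κ ℂ) :
    (choi F).trace = (F 1).trace := by
  rw [← sum_single_one, map_sum, trace_sum, trace, Fintype.sum_prod_type, Finset.sum_comm]
  rfl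

theorem posSemidef_apply_one_of_posSemidef_choi {F : Matrix n n ℂ →ₗ[ℂ] Matrix κ κ ℂ}
    (hF : (choi F).PosSemidef) : (F 1).PosSemidef := by
  rw [← sum_single_one, map_sum]
  exact posSemidef_sum _ fun i _ => hF.submatrix fun a => (a, i)

theorem trace_choi_conjTranspose_mul_choi [Fintype κ] (F G : Matrix n n ℂ →ₗ[ℂ] Matrix κ κ ℂ) :
    ((choi F)ᴴ * choi G).trace
      = ∑ p : n × n, ((F (single p.2 p.1 1))ᴴ * G (single p.2 p.1 1)).trace := by
  simp only [trace, diag, mul_apply, conjTranspose_apply, choi, of_apply, Fintype.sum_prod_type]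
  exact Finset.sum_comm.trans (Finset.sum_congr rfl fun _ _ =>
    (Finset.sum_congr rfl fun _ _ => Finset.sum_comm).trans Finset.sum_comm)

theorem trace_adjoint_conj_comp_conj_eq_trace_choi (F G : Matrix n n ℂ →ₗ[ℂ] Matrix n n ℂ) :
    ((vecL2.conj F).adjoint ∘ₗ vecL2.conj G).trace ℂ _ = ((choi F)ᴴ * choi G).trace := by
  rw [← (EuclideanSpace.basisFun (n × n) ℂ).sum_inner_apply_eq_trace,
    trace_choi_conjTranspose_mul_choi]
  refine Finset.sum_congr rfl fun p _ => ?_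
  simp [LinearEquiv.conj_apply_apply, vecL2_symm_single, inner_vecL2]

end Choi

section UnitalBlock

variable {n ι : Type*} [Fintype n] [DecidableEq n] [Fintype ι] [DecidableEq ι]

def unitalBlock (X : ι → Matrix n n ℂ) (F : Matrix n n ℂ →ₗ[ℂ] Matrix n n ℂ) : Matrix ι ι ℂ :=
  of fun i j => ((X i)ᴴ * F (X j)).trace

theorem trace_unitalBlock_conjTranspose_mul (X : ι → Matrix n n ℂ)
    (hXtr : ∀ i, (X i).trace = 0)
    (hXortho : ∀ i j, ((X i)ᴴ * X j).trace = if i = j then 1 else 0)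
    (hcard : Fintype.card ι + 1 = Fintype.card n ^ 2)
    (F G : Matrix n n ℂ →ₗ[ℂ] Matrix n n ℂ) (hF : ∀ ρ, (F ρ).trace = ρ.trace) :
    ((unitalBlock X F)ᴴ * unitalBlock X G).trace
      = ((choi F)ᴴ * choi G).trace - (Fintype.card n : ℝ)⁻¹ • ((F 1)ᴴ * G 1).trace := by
  obtain ⟨b, hb0, hb⟩ := exists_orthonormalBasis_vecL2 X hXtr hXortho hcard
  have h := b.sum_sum_conj_inner_mul_inner_some (vecL2.conj F) (vecL2.conj G) fun j => by
    simp [hb0, hb, LinearEquiv.conj_apply_apply, inner_vecL2, hF, hXtr]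
  rw [trace_adjoint_conj_comp_conj_eq_trace_choi] at h
  simp only [hb0, hb, LinearEquiv.conj_apply_apply, LinearEquiv.symm_apply_apply, map_smul,
    inner_smul_left, inner_smul_right, inner_vecL2, Complex.coe_algebraMap, map_inv₀,
    Complex.conj_ofReal] at h
  have hsqrt : ((Fintype.card n : ℝ).sqrt : ℂ)⁻¹ * ((Fintype.card n : ℝ).sqrt : ℂ)⁻¹
      = (Fintype.card n : ℂ)⁻¹ := by
    rw [← mul_inv, ← Complex.ofReal_mul, Real.mul_self_sqrt (Nat.cast_nonneg _),
      Complex.ofReal_natCast]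
  rw [← mul_assoc, hsqrt] at h
  rw [Complex.real_smul, Complex.ofReal_inv, Complex.ofReal_natCast, ← h]
  simp [trace, mul_apply, unitalBlock]

theorem neg_card_le_trace_unitalBlock_conjTranspose_mul (X : ι → Matrix n n ℂ)
    (hXtr : ∀ i, (X i).trace = 0)
    (hXortho : ∀ i j, ((X i)ᴴ * X j).trace = if i = j then 1 else 0)
    (hcard : Fintype.card ι + 1 = Fintype.card n ^ 2)
    {E₁ E₂ : Matrix n n ℂ →ₗ[ℂ] Matrix n n ℂ}
    (hE₁cp : (choi E₁).PosSemidef) (hE₁tp : ∀ ρ, (E₁ ρ).trace = ρ.trace)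
    (hE₂cp : (choi E₂).PosSemidef) (hE₂tp : ∀ ρ, (E₂ ρ).trace = ρ.trace) :
    -(Fintype.card n : ℂ) ≤ ((unitalBlock X E₁)ᴴ * unitalBlock X E₂).trace := by
  rw [trace_unitalBlock_conjTranspose_mul X hXtr hXortho hcard E₁ E₂ hE₁tp]
  have hJ := hE₁cp.trace_conjTranspose_mul_nonneg hE₂cp
  have hI := (posSemidef_apply_one_of_posSemidef_choi hE₁cp).trace_conjTranspose_mul_le
    (posSemidef_apply_one_of_posSemidef_choi hE₂cp)
  rw [hE₁tp, hE₂tp, trace_one] at hI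
  have hn : (Fintype.card n : ℝ) ≠ 0 := by exact_mod_cast (Nat.pos_of_add_one_eq_sq hcard).ne'
  calc -(Fintype.card n : ℂ)
        = 0 - (Fintype.card n : ℝ)⁻¹ • ((Fintype.card n : ℂ) * Fintype.card n) := by
        rw [Complex.real_smul]
        push_cast
        field_simp
        ring
    _ ≤ _ := sub_le_sub hJ (smul_le_smul_of_nonneg_left hI (by positivity))

theorem re_trace_unitalBlock_conjTranspose_mul_self_le (X : ι → Matrix n n ℂ)
    (hXtr : ∀ i, (X i).trace = 0)
    (hXortho : ∀ i j, ((X i)ᴴ * X j).trace = if i = j then 1 else 0)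
    (hcard : Fintype.card ι + 1 = Fintype.card n ^ 2)
    {E : Matrix n n ℂ →ₗ[ℂ] Matrix n n ℂ}
    (hEcp : (choi E).PosSemidef) (hEtp : ∀ ρ, (E ρ).trace = ρ.trace) :
    ((unitalBlock X E)ᴴ * unitalBlock X E).trace.re ≤ Fintype.card n ^ 2 - 1 := by
  rw [trace_unitalBlock_conjTranspose_mul X hXtr hXortho hcard E E hEtp, Complex.sub_re,
    Complex.smul_re, smul_eq_mul]
  have hn : 0 < (Fintype.card n : ℝ) := by exact_mod_cast Nat.pos_of_add_one_eq_sq hcard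
  have hJ : ((choi E)ᴴ * choi E).trace.re ≤ Fintype.card n ^ 2 := by
    have h := hEcp.trace_conjTranspose_mul_le hEcp
    rw [trace_choi, hEtp, trace_one] at h
    simpa [sq] using (Complex.le_def.mp h).1
  have hI : (Fintype.card n : ℝ) ≤ ((E 1)ᴴ * E 1).trace.re := by
    have h := norm_trace_sq_le (E 1)
    rw [hEtp, trace_one, Complex.norm_natCast, sq] at h
    exact le_of_mul_le_mul_left h hn
  have : 1 ≤ (Fintype.card n : ℝ)⁻¹ * ((E 1)ᴴ * E 1).trace.re := by
    rw [← inv_mul_cancel₀ hn.ne']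
    gcongr
  linarith

theorem trace_unitalBlock_conjTranspose_mul_le (X : ι → Matrix n n ℂ)
    (hXtr : ∀ i, (X i).trace = 0)
    (hXortho : ∀ i j, ((X i)ᴴ * X j).trace = if i = j then 1 else 0)
    (hcard : Fintype.card ι + 1 = Fintype.card n ^ 2)
    {E₁ E₂ : Matrix n n ℂ →ₗ[ℂ] Matrix n n ℂ}
    (hE₁cp : (choi E₁).PosSemidef) (hE₁tp : ∀ ρ, (E₁ ρ).trace = ρ.trace)
    (hE₂cp : (choi E₂).PosSemidef) (hE₂tp : ∀ ρ, (E₂ ρ).trace = ρ.trace) :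
    ((unitalBlock X E₁)ᴴ * unitalBlock X E₂).trace ≤ Fintype.card n ^ 2 - 1 := by
  set T₁ := vecL2 (unitalBlock X E₁)
  set T₂ := vecL2 (unitalBlock X E₂)
  have him : ((unitalBlock X E₁)ᴴ * unitalBlock X E₂).trace.im = 0 := by
    have hJ := hE₁cp.trace_conjTranspose_mul_nonneg hE₂cp
    have hI := (posSemidef_apply_one_of_posSemidef_choi hE₁cp).trace_conjTranspose_mul_nonneg
      (posSemidef_apply_one_of_posSemidef_choi hE₂cp)
    rw [trace_unitalBlock_conjTranspose_mul X hXtr hXortho hcard E₁ E₂ hE₁tp, Complex.sub_im,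
      Complex.smul_im, ← (Complex.le_def.mp hJ).2, ← (Complex.le_def.mp hI).2]
    simp
  have hre : ((unitalBlock X E₁)ᴴ * unitalBlock X E₂).trace.re ≤ Fintype.card n ^ 2 - 1 := by
    have h₁ : ‖T₁‖ ^ 2 ≤ Fintype.card n ^ 2 - 1 := by
      rw [@norm_sq_eq_re_inner ℂ, inner_vecL2]
      exact re_trace_unitalBlock_conjTranspose_mul_self_le X hXtr hXortho hcard hE₁cp hE₁tp
    have h₂ : ‖T₂‖ ^ 2 ≤ Fintype.card n ^ 2 - 1 := by
      rw [@norm_sq_eq_re_inner ℂ, inner_vecL2]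
      exact re_trace_unitalBlock_conjTranspose_mul_self_le X hXtr hXortho hcard hE₂cp hE₂tp
    rw [← inner_vecL2]
    calc _ ≤ ‖T₁‖ * ‖T₂‖ := re_inner_le_norm (𝕜 := ℂ) _ _
      _ ≤ _ := by nlinarith [norm_nonneg T₁, norm_nonneg T₂]
  rw [show (Fintype.card n : ℂ) ^ 2 - 1 = ((Fintype.card n ^ 2 - 1 : ℝ) : ℂ) by push_cast; rfl]
  exact Complex.le_def.mpr ⟨by rwa [Complex.ofReal_re], by rwa [Complex.ofReal_im]⟩

end UnitalBlock

theorem T_inner_product_bounds_general {d : ℕ} (hd : 0 < d)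
    (E1 E2 : Matrix (Fin d) (Fin d) ℂ →ₗ[ℂ] Matrix (Fin d) (Fin d) ℂ)
    (hE1cp : (choi E1).PosSemidef) (hE1tp : ∀ ρ, (E1 ρ).trace = ρ.trace)
    (hE2cp : (choi E2).PosSemidef) (hE2tp : ∀ ρ, (E2 ρ).trace = ρ.trace)
    (X : Fin (d ^ 2 - 1) → Matrix (Fin d) (Fin d) ℂ)
    (hXtr : ∀ i, (X i).trace = 0)
    (hXortho : ∀ i j, ((X i)ᴴ * X j).trace = if i = j then 1 else 0) :
    (-(d : ℂ) ≤ ∑ i, ∑ j,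
        (starRingEnd ℂ) (((X i)ᴴ * E1 (X j)).trace) * ((X i)ᴴ * E2 (X j)).trace)
    ∧
    (∑ i, ∑ j, (starRingEnd ℂ) (((X i)ᴴ * E1 (X j)).trace) * ((X i)ᴴ * E2 (X j)).trace
        ≤ (d : ℂ) ^ 2 - 1) := by
  have hcard : Fintype.card (Fin (d ^ 2 - 1)) + 1 = Fintype.card (Fin d) ^ 2 := by
    simp only [Fintype.card_fin]
    exact Nat.sub_add_cancel (Nat.one_le_pow _ _ hd)
  have hT : ∑ i, ∑ j, (starRingEnd ℂ) (((X i)ᴴ * E1 (X j)).trace) * ((X i)ᴴ * E2 (X j)).trace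
      = ((unitalBlock X E1)ᴴ * unitalBlock X E2).trace := by
    rw [Finset.sum_comm]
    simp [trace, mul_apply, unitalBlock]
  have hlower :=
    neg_card_le_trace_unitalBlock_conjTranspose_mul X hXtr hXortho hcard hE1cp hE1tp hE2cp hE2tp
  have hupper :=
    trace_unitalBlock_conjTranspose_mul_le X hXtr hXortho hcard hE1cp hE1tp hE2cp hE2tp
  rw [Fintype.card_fin] at hlower hupper
  exact hT ▸ ⟨hlower, hupper⟩

/-- For two quantum channels `E₁, E₂` on `M_d(ℂ)` with unital Liouville blocks `T₁, T₂`
(entries `tr[X_i† E_k(X_j)]` in a Hermitian traceless orthonormal basis completing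
`X_0 = I/√d`), the Hilbert–Schmidt inner product satisfies
`−d ≤ ⟨T₁, T₂⟩ = tr[T₁†T₂] ≤ d² − 1`. -/
theorem T_inner_product_bounds {d : ℕ} (hd : 0 < d)
    (E1 E2 : Matrix (Fin d) (Fin d) ℂ →ₗ[ℂ] Matrix (Fin d) (Fin d) ℂ)
    (hE1cp : (choi E1).PosSemidef) (hE1tp : ∀ ρ, (E1 ρ).trace = ρ.trace)
    (hE2cp : (choi E2).PosSemidef) (hE2tp : ∀ ρ, (E2 ρ).trace = ρ.trace)
    (X : Fin (d ^ 2 - 1) → Matrix (Fin d) (Fin d) ℂ)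
    (hXtr : ∀ i, (X i).trace = 0)
    (hXherm : ∀ i, (X i)ᴴ = X i)
    (hXortho : ∀ i j, ((X i)ᴴ * X j).trace = if i = j then 1 else 0) :
    (-(d : ℂ) ≤ ∑ i, ∑ j,
        (starRingEnd ℂ) (((X i)ᴴ * E1 (X j)).trace) * ((X i)ᴴ * E2 (X j)).trace)
    ∧
    (∑ i, ∑ j, (starRingEnd ℂ) (((X i)ᴴ * E1 (X j)).trace) * ((X i)ᴴ * E2 (X j)).trace
        ≤ (d : ℂ) ^ 2 - 1) :=
  T_inner_product_bounds_general hd E1 E2 hE1cp hE1tp hE2cp hE2tp X hXtr hXortho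
end

section
/- Write the Choi state of a qubit channel E as J(E) = (1/4)(I⊗I + Σ_i x_i σ_i ⊗ I + Σ_{i,j} T_{ij} σ_i ⊗ σ_j). If J is a valid state (positive semidefinite with trace 1) then the 'unitalized' matrix (1/4)(I⊗I + Σ_{i,j} T_{ij} σ_i ⊗ σ_j) obtained by setting x = 0 is also a valid state; equivalently, for every qubit channel there exists a unital qubit channel with the same T-matrix. -/
open Matrix Kronecker ComplexOrder

/-- The Pauli matrices. -/
noncomputable def pauli : Fin 3 → Matrix (Fin 2) (Fin 2) ℂ
  | 0 => !![0, 1; 1, 0]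
  | 1 => !![0, -Complex.I; Complex.I, 0]
  | 2 => !![1, 0; 0, -1]

/-- The candidate Choi matrix `(1/4)(I⊗I + Σ_i x_i σ_i ⊗ I + Σ_{ij} T_{ij} σ_i ⊗ σ_j)`
of a qubit channel with non-unitality vector `x` and `T`-matrix `T`. -/
noncomputable def choiForm (x : Fin 3 → ℝ) (T : Matrix (Fin 3) (Fin 3) ℝ) :
    Matrix (Fin 2 × Fin 2) (Fin 2 × Fin 2) ℂ :=
  ((4 : ℂ))⁻¹ • ((1 : Matrix (Fin 2 × Fin 2) (Fin 2 × Fin 2) ℂ)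
    + ∑ i, (x i : ℂ) • (pauli i ⊗ₖ (1 : Matrix (Fin 2) (Fin 2) ℂ))
    + ∑ i, ∑ j, (T i j : ℂ) • (pauli i ⊗ₖ pauli j))

/-! The spin flip `ρ ↦ (σ_y ⊗ σ_y) ρᵀ (σ_y ⊗ σ_y)` is a transpose followed by a unitary
conjugation, so it preserves positivity. Since `σ_y σ_iᵀ σ_y = -σ_i`, it fixes every correlation
term `σ_i ⊗ σ_j` and negates every local term `σ_i ⊗ I`: it maps the Choi matrix with data
`(x, T)` to the one with data `(-x, T)`. The unitalized matrix is the average of the two, hence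
positive semidefinite; its trace is `1` because the Pauli matrices are traceless. -/

lemma Matrix.neg_kronecker {α l m n p : Type*} [Mul α] [HasDistribNeg α]
    (A : Matrix l m α) (B : Matrix n p α) : (-A) ⊗ₖ B = -(A ⊗ₖ B) := by
  ext; simp

lemma Matrix.kronecker_neg {α l m n p : Type*} [Mul α] [HasDistribNeg α]
    (A : Matrix l m α) (B : Matrix n p α) : A ⊗ₖ (-B) = -(A ⊗ₖ B) := by
  ext; simp

lemma trace_pauli (i : Fin 3) : (pauli i).trace = 0 := by
  fin_cases i <;> simp [pauli, trace_fin_two]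

lemma conjTranspose_pauli_one : (pauli 1)ᴴ = pauli 1 := by
  ext a b
  fin_cases a <;> fin_cases b <;> simp [pauli, conjTranspose_apply]

lemma pauli_one_mul_self : pauli 1 * pauli 1 = 1 := by
  ext a b
  fin_cases a <;> fin_cases b <;> simp [pauli, mul_apply, Fin.sum_univ_succ, one_apply]

noncomputable def qubitFlip (a : Matrix (Fin 2) (Fin 2) ℂ) : Matrix (Fin 2) (Fin 2) ℂ :=
  pauli 1 * aᵀ * pauli 1

noncomputable def spinFlip :
    Matrix (Fin 2 × Fin 2) (Fin 2 × Fin 2) ℂ →ₗ[ℂ] Matrix (Fin 2 × Fin 2) (Fin 2 × Fin 2) ℂ where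
  toFun ρ := (pauli 1 ⊗ₖ pauli 1) * ρᵀ * (pauli 1 ⊗ₖ pauli 1)
  map_add' ρ σ := by rw [transpose_add, Matrix.mul_add, Matrix.add_mul]
  map_smul' c ρ := by rw [transpose_smul, Matrix.mul_smul, Matrix.smul_mul, RingHom.id_apply]

lemma qubitFlip_one : qubitFlip 1 = 1 := by
  rw [qubitFlip, transpose_one, Matrix.mul_one, pauli_one_mul_self]

lemma qubitFlip_pauli (i : Fin 3) : qubitFlip (pauli i) = -pauli i := by
  fin_cases i <;>
    · ext a b
      fin_cases a <;> fin_cases b <;>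
        simp [qubitFlip, pauli, mul_apply, Fin.sum_univ_succ, vecMul, dotProduct]

lemma spinFlip_kronecker (a b : Matrix (Fin 2) (Fin 2) ℂ) :
    spinFlip (a ⊗ₖ b) = qubitFlip a ⊗ₖ qubitFlip b := by
  rw [spinFlip, LinearMap.coe_mk, AddHom.coe_mk, ← kroneckerMap_transpose, ← mul_kronecker_mul,
    ← mul_kronecker_mul]
  rfl

lemma Matrix.PosSemidef.spinFlip {ρ : Matrix (Fin 2 × Fin 2) (Fin 2 × Fin 2) ℂ}
    (hρ : ρ.PosSemidef) : (spinFlip ρ).PosSemidef := by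
  have hU : (pauli 1 ⊗ₖ pauli 1)ᴴ = pauli 1 ⊗ₖ pauli 1 := by
    rw [conjTranspose_kronecker, conjTranspose_pauli_one]
  rw [_root_.spinFlip, LinearMap.coe_mk, AddHom.coe_mk]
  nth_rewrite 2 [← hU]
  exact hρ.transpose.mul_mul_conjTranspose_same _

lemma spinFlip_choiForm (x : Fin 3 → ℝ) (T : Matrix (Fin 3) (Fin 3) ℝ) :
    spinFlip (choiForm x T) = choiForm (-x) T := by
  have h1 : spinFlip 1 = 1 := by
    rw [← one_kronecker_one, spinFlip_kronecker, qubitFlip_one]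
  simp [choiForm, spinFlip_kronecker, qubitFlip_one, qubitFlip_pauli, h1, neg_kronecker,
    kronecker_neg]

lemma trace_choiForm (x : Fin 3 → ℝ) (T : Matrix (Fin 3) (Fin 3) ℝ) :
    (choiForm x T).trace = 1 := by
  simp [choiForm, trace_kronecker, trace_pauli]

lemma choiForm_zero_eq_midpoint (x : Fin 3 → ℝ) (T : Matrix (Fin 3) (Fin 3) ℝ) :
    choiForm 0 T = (2⁻¹ : ℝ) • (choiForm x T + choiForm (-x) T) := by
  unfold choiForm
  simp only [Pi.neg_apply, Complex.ofReal_neg, neg_smul, Pi.zero_apply, Complex.ofReal_zero,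
    zero_smul, Finset.sum_const_zero, Finset.sum_neg_distrib]
  module

theorem unitalized_choi_is_state_general (x : Fin 3 → ℝ) (T : Matrix (Fin 3) (Fin 3) ℝ)
    (hpos : (choiForm x T).PosSemidef) :
    (choiForm 0 T).PosSemidef ∧ (choiForm 0 T).trace = 1 := by
  refine ⟨?_, trace_choiForm 0 T⟩
  rw [choiForm_zero_eq_midpoint x T, ← spinFlip_choiForm]
  exact (hpos.add hpos.spinFlip).smul (by norm_num)

/-- If the Choi matrix of a qubit channel, written in the Pauli expansion with
non-unitality vector `x` and `T`-matrix `T`, is a valid state (positive semidefinite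
with trace 1), then the `unitalized` matrix obtained by setting `x = 0` is also a valid
state; i.e., every qubit channel admits a unital qubit channel with the same `T`-matrix. -/
theorem unitalized_choi_is_state (x : Fin 3 → ℝ) (T : Matrix (Fin 3) (Fin 3) ℝ)
    (hpos : (choiForm x T).PosSemidef) (htr : (choiForm x T).trace = 1) :
    (choiForm 0 T).PosSemidef ∧ (choiForm 0 T).trace = 1 :=
  unitalized_choi_is_state_general x T hpos
end

section
/- Let t_{ij}, s_{ij} (1 ≤ i,j ≤ r) be real symmetric arrays and p a probability vector satisfying: t_{ii}, s_{ii} ∈ [0,1]; |t_{ij}| ≤ 1 and t_{ij} ≥ −β_A for all i,j; |s_{ij}| ≤ 1 and s_{ij} ≥ −β_B; and set A = Σ_{ij} p_i p_j t_{ij} ∈ [0,1], B = Σ_{ij} p_i p_j s_{ij} ∈ [0,1] with A ≤ B. Then Σ_{ij} p_i p_j t_{ij} s_{ij} − A·B ≤ β_A(1+β_B)(1 − Σ_i p_i²) + 1/4. -/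
/-!
Off the diagonal, `t s ≤ t + β_A (1 + β_B)` because `-t ≤ β_A` and `0 ≤ 1 - s ≤ 1 + β_B`; on the
diagonal `t s ≤ t` since `0 ≤ t` and `s ≤ 1`. Averaging against `p_i p_j` gives
`Σ p_i p_j t_{ij} s_{ij} ≤ A + β_A (1 + β_B) (1 - Σ p_i²)`, and the remaining `A - A B` is at most
`A (1 - A) ≤ 1/4` because `0 ≤ A ≤ B`.
-/

open Finset

lemma mul_le_add_mul_of_neg_le {β γ t s : ℝ} (hβ : 0 ≤ β) (ht : -β ≤ t) (hs : -γ ≤ s)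
    (hs1 : s ≤ 1) : t * s ≤ t + β * (1 + γ) := by
  nlinarith [mul_nonneg (by linarith : 0 ≤ β + t) (by linarith : 0 ≤ 1 - s)]

lemma sub_mul_le_one_fourth {a b : ℝ} (ha : 0 ≤ a) (hab : a ≤ b) : a - a * b ≤ 1 / 4 := by
  nlinarith [mul_nonneg ha (sub_nonneg.mpr hab), sq_nonneg (2 * a - 1)]

lemma sum_sum_mul_mul_ite_eq {ι : Type*} [Fintype ι] [DecidableEq ι] (p : ι → ℝ) :
    ∑ i, ∑ j, p i * p j * (if i = j then 0 else 1) = (∑ i, p i) ^ 2 - ∑ i, p i ^ 2 := by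
  have hrow : ∀ i j, p i * p j * (if i = j then 0 else 1)
      = p i * p j - if i = j then p i * p j else 0 := by
    intro i j; split_ifs <;> ring
  simp only [hrow, sum_sub_distrib, sum_ite_eq, mem_univ, if_true, sq, sum_mul_sum]

lemma sum_sum_mul_le_add_of_offDiag_le {ι : Type*} [Fintype ι] [DecidableEq ι] {p : ι → ℝ}
    (hp : ∀ i, 0 ≤ p i) {x y : ι → ι → ℝ} {c : ℝ} (hdiag : ∀ i, x i i ≤ y i i)
    (hoff : ∀ i j, i ≠ j → x i j ≤ y i j + c) :
    ∑ i, ∑ j, p i * p j * x i j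
      ≤ ∑ i, ∑ j, p i * p j * y i j + c * ((∑ i, p i) ^ 2 - ∑ i, p i ^ 2) := by
  have hentry : ∀ i j, x i j ≤ y i j + c * (if i = j then 0 else 1) := by
    intro i j
    split_ifs with h
    · subst h; simpa using hdiag i
    · simpa using hoff i j h
  calc ∑ i, ∑ j, p i * p j * x i j
      ≤ ∑ i, ∑ j, p i * p j * (y i j + c * (if i = j then 0 else 1)) :=
        sum_le_sum fun i _ => sum_le_sum fun j _ =>
          mul_le_mul_of_nonneg_left (hentry i j) (mul_nonneg (hp i) (hp j))
    _ = _ := by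
        rw [← sum_sum_mul_mul_ite_eq, mul_sum]
        simp only [mul_sum, ← sum_add_distrib]
        exact sum_congr rfl fun i _ => sum_congr rfl fun j _ => by ring

theorem correlated_unitarity_core_bound_general {r : ℕ} (βA βB : ℝ)
    (hβA0 : 0 < βA)
    (t s : Fin r → Fin r → ℝ) (p : Fin r → ℝ)
    (hp0 : ∀ i, 0 ≤ p i) (hp1 : ∑ i, p i = 1)
    (htd0 : ∀ i, 0 ≤ t i i)
    (htlb : ∀ i j, -βA ≤ t i j)
    (hsabs : ∀ i j, |s i j| ≤ 1) (hslb : ∀ i j, -βB ≤ s i j)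
    (hA0 : 0 ≤ ∑ i, ∑ j, p i * p j * t i j)
    (hAB : ∑ i, ∑ j, p i * p j * t i j ≤ ∑ i, ∑ j, p i * p j * s i j) :
    (∑ i, ∑ j, p i * p j * t i j * s i j)
        - (∑ i, ∑ j, p i * p j * t i j) * (∑ i, ∑ j, p i * p j * s i j)
      ≤ βA * (1 + βB) * (1 - ∑ i, p i ^ 2) + 1 / 4 := by
  have hs1 : ∀ i j, s i j ≤ 1 := fun i j => (abs_le.mp (hsabs i j)).2
  have hts : ∑ i, ∑ j, p i * p j * (t i j * s i j)
      ≤ ∑ i, ∑ j, p i * p j * t i j + βA * (1 + βB) * ((∑ i, p i) ^ 2 - ∑ i, p i ^ 2) :=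
    sum_sum_mul_le_add_of_offDiag_le hp0 (fun i => mul_le_of_le_one_right (htd0 i) (hs1 i i))
      fun i j _ => mul_le_add_mul_of_neg_le hβA0.le (htlb i j) (hslb i j) (hs1 i j)
  simp only [hp1, one_pow, ← mul_assoc] at hts
  linarith [sub_mul_le_one_fourth hA0 hAB]

/-- Abstract combinatorial core of the bound on correlated unitarity over separable
channels: for symmetric arrays `t, s` of normalized inner products and a probability
vector `p`, with `A = Σ p_i p_j t_{ij}` and `B = Σ p_i p_j s_{ij}` in `[0,1]`, `A ≤ B`,
one has `Σ p_i p_j t_{ij} s_{ij} − A·B ≤ β_A(1+β_B)(1 − Σ p_i²) + 1/4`. -/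
theorem correlated_unitarity_core_bound {r : ℕ} (βA βB : ℝ)
    (hβA0 : 0 < βA) (hβA1 : βA ≤ 1) (hβB0 : 0 < βB) (hβB1 : βB ≤ 1)
    (t s : Fin r → Fin r → ℝ) (p : Fin r → ℝ)
    (hp0 : ∀ i, 0 ≤ p i) (hp1 : ∑ i, p i = 1)
    (htsymm : ∀ i j, t i j = t j i) (hssymm : ∀ i j, s i j = s j i)
    (htd0 : ∀ i, 0 ≤ t i i) (htd1 : ∀ i, t i i ≤ 1)
    (hsd0 : ∀ i, 0 ≤ s i i) (hsd1 : ∀ i, s i i ≤ 1)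
    (htabs : ∀ i j, |t i j| ≤ 1) (htlb : ∀ i j, -βA ≤ t i j)
    (hsabs : ∀ i j, |s i j| ≤ 1) (hslb : ∀ i j, -βB ≤ s i j)
    (hsub : ∀ i j, s i j ≤ Real.sqrt (s i i * s j j))
    (hA0 : 0 ≤ ∑ i, ∑ j, p i * p j * t i j)
    (hA1 : ∑ i, ∑ j, p i * p j * t i j ≤ 1)
    (hB0 : 0 ≤ ∑ i, ∑ j, p i * p j * s i j)
    (hB1 : ∑ i, ∑ j, p i * p j * s i j ≤ 1)
    (hAB : ∑ i, ∑ j, p i * p j * t i j ≤ ∑ i, ∑ j, p i * p j * s i j) :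
    (∑ i, ∑ j, p i * p j * t i j * s i j)
        - (∑ i, ∑ j, p i * p j * t i j) * (∑ i, ∑ j, p i * p j * s i j)
      ≤ βA * (1 + βB) * (1 - ∑ i, p i ^ 2) + 1 / 4 :=
  correlated_unitarity_core_bound_general βA βB hβA0 t s p hp0 hp1 htd0 htlb hsabs hslb hA0 hAB
end
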